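/- For a strictly positive probability mass function f_P on ℤ and the family f_{P'}^γ = (1−2γ)f_P + γ(shift by +1 of f_P) + γ(shift by −1 of f_P), the KL divergence D(f_P ‖ f_{P'}^γ) is o(γ) as γ → 0⁺; i.e., lim_{γ→0⁺} D(f_P ‖ f_{P'}^γ)/γ = 0. -/

import Mathlib

open Filter Topology

/-- Discrete Kullback–Leibler divergence on `ℤ`. -/
noncomputable def discKL (g f : ℤ → ℝ) : ℝ := ∑' n : ℤ, g n * Real.log (g n / f n)

/-- Nearest-neighbor smoothing of a PMF on `ℤ` with parameter `γ`. -/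
noncomputable def smoothPMF (f : ℤ → ℝ) (γ : ℝ) (n : ℤ) : ℝ :=
  (1 - 2 * γ) * f n + γ * (f (n - 1) + f (n + 1))

/-!
Write `smoothPMF f γ = f + γΔf` with `Δ` the discrete Laplacian, so that `∑ Δf = 0` and
`D(f ‖ f + γΔf) / γ = ∑ₙ (f log (f / (f + γΔf)) + γΔf) / γ`. By `1 - 1/x ≤ log x ≤ x - 1` each
summand lies between `0` and `γ (Δf)² / (f + γΔf)`, which tends to `0` pointwise and, for
`γ ≤ 1/4`, is at most `Δf + 4f`, a summable function. Dominated convergence concludes.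
-/

open Real

namespace Real

theorem mul_log_div_add_add_nonneg {a t : ℝ} (ha : 0 < a) (hat : 0 < a + t) :
    0 ≤ a * log (a / (a + t)) + t := by
  have hlog : 1 - (a + t) / a ≤ log (a / (a + t)) := by
    simpa only [inv_div] using one_sub_inv_le_log_of_pos (div_pos ha hat)
  have : a * (1 - (a + t) / a) = -t := by field_simp; ring
  nlinarith [mul_le_mul_of_nonneg_left hlog ha.le]

theorem mul_log_div_add_add_le {a t : ℝ} (ha : 0 < a) (hat : 0 < a + t) :
    a * log (a / (a + t)) + t ≤ t ^ 2 / (a + t) := by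
  have hlog := log_le_sub_one_of_pos (div_pos ha hat)
  calc a * log (a / (a + t)) + t ≤ a * (a / (a + t) - 1) + t := by gcongr
    _ = t ^ 2 / (a + t) := by field_simp; ring

end Real

def discLaplacian (f : ℤ → ℝ) (n : ℤ) : ℝ := f (n - 1) + f (n + 1) - 2 * f n

theorem smoothPMF_eq_add_mul_discLaplacian (f : ℤ → ℝ) (γ : ℝ) (n : ℤ) :
    smoothPMF f γ n = f n + γ * discLaplacian f n := by
  rw [smoothPMF, discLaplacian]; ring

theorem Summable.discLaplacian {f : ℤ → ℝ} (hf : Summable f) : Summable (discLaplacian f) :=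
  (((Equiv.subRight 1).summable_iff.mpr hf).add ((Equiv.addRight 1).summable_iff.mpr hf)).sub
    (hf.mul_left 2)

theorem tsum_discLaplacian {f : ℤ → ℝ} (hf : Summable f) : ∑' n, discLaplacian f n = 0 := by
  have hm : Summable fun n ↦ f (n - 1) := (Equiv.subRight 1).summable_iff.mpr hf
  have hp : Summable fun n ↦ f (n + 1) := (Equiv.addRight 1).summable_iff.mpr hf
  have hm' : ∑' n, f (n - 1) = ∑' n, f n := (Equiv.subRight 1).tsum_eq f
  have hp' : ∑' n, f (n + 1) = ∑' n, f n := (Equiv.addRight 1).tsum_eq f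
  unfold discLaplacian
  rw [(hm.add hp).tsum_sub (hf.mul_left 2), hm.tsum_add hp, tsum_mul_left, hm', hp']
  ring

theorem smoothPMF_pos {f : ℤ → ℝ} (hpos : ∀ n, 0 < f n) {γ : ℝ} (hγ₀ : 0 ≤ γ) (hγ : γ < 1 / 2)
    (n : ℤ) : 0 < smoothPMF f γ n := by
  have := hpos n; have := hpos (n - 1); have := hpos (n + 1)
  have : 0 < 1 - 2 * γ := by linarith
  unfold smoothPMF
  positivity

theorem mul_sq_discLaplacian_div_smoothPMF_le {f : ℤ → ℝ} (hpos : ∀ n, 0 < f n) {γ : ℝ}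
    (hγ₀ : 0 ≤ γ) (hγ : γ ≤ 1 / 4) (n : ℤ) :
    γ * discLaplacian f n ^ 2 / smoothPMF f γ n ≤ discLaplacian f n + 4 * f n := by
  rw [div_le_iff₀ (smoothPMF_pos hpos hγ₀ (by linarith) n), smoothPMF, discLaplacian]
  have := hpos n; have := hpos (n - 1); have := hpos (n + 1)
  have hp : 0 ≤ (f (n - 1) + f (n + 1)) * f n := by positivity
  nlinarith [mul_nonneg (by linarith : (0 : ℝ) ≤ 1 + 4 * γ) hp,
    mul_nonneg (by linarith : (0 : ℝ) ≤ 2 - 8 * γ) (sq_nonneg (f n))]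

noncomputable def klExcess (f : ℤ → ℝ) (γ : ℝ) (n : ℤ) : ℝ :=
  f n * log (f n / smoothPMF f γ n) + γ * discLaplacian f n

section klExcess

variable {f : ℤ → ℝ}

theorem klExcess_nonneg (hpos : ∀ n, 0 < f n) {γ : ℝ} (hγ₀ : 0 ≤ γ) (hγ : γ < 1 / 2) (n : ℤ) :
    0 ≤ klExcess f γ n := by
  have hs := smoothPMF_pos hpos hγ₀ hγ n
  rw [smoothPMF_eq_add_mul_discLaplacian] at hs
  rw [klExcess, smoothPMF_eq_add_mul_discLaplacian]
  exact mul_log_div_add_add_nonneg (hpos n) hs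

theorem klExcess_div_le (hpos : ∀ n, 0 < f n) {γ : ℝ} (hγ₀ : 0 < γ) (hγ : γ < 1 / 2) (n : ℤ) :
    klExcess f γ n / γ ≤ γ * discLaplacian f n ^ 2 / smoothPMF f γ n := by
  have hs := smoothPMF_pos hpos hγ₀.le hγ n
  rw [smoothPMF_eq_add_mul_discLaplacian] at hs ⊢
  rw [div_le_iff₀ hγ₀, klExcess, smoothPMF_eq_add_mul_discLaplacian]
  calc _ ≤ (γ * discLaplacian f n) ^ 2 / (f n + γ * discLaplacian f n) :=
        mul_log_div_add_add_le (hpos n) hs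
    _ = _ := by ring

theorem tendsto_klExcess_div (hpos : ∀ n, 0 < f n) (n : ℤ) :
    Tendsto (fun γ ↦ klExcess f γ n / γ) (𝓝[>] 0) (𝓝 0) := by
  have hcont : ContinuousAt (fun γ ↦ γ * discLaplacian f n ^ 2 / smoothPMF f γ n) 0 := by
    unfold smoothPMF
    exact ContinuousAt.div (by fun_prop) (by fun_prop) (by simpa using (hpos n).ne')
  have hupper : Tendsto (fun γ ↦ γ * discLaplacian f n ^ 2 / smoothPMF f γ n) (𝓝[>] 0) (𝓝 0) := by
    simpa using hcont.tendsto.mono_left nhdsWithin_le_nhds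
  refine tendsto_of_tendsto_of_tendsto_of_le_of_le' tendsto_const_nhds hupper ?_ ?_ <;>
    filter_upwards [Ioo_mem_nhdsGT (by norm_num : (0 : ℝ) < 1 / 2)] with γ hγ
  · exact div_nonneg (klExcess_nonneg hpos hγ.1.le hγ.2 n) hγ.1.le
  · exact klExcess_div_le hpos hγ.1 hγ.2 n

theorem norm_klExcess_div_le (hpos : ∀ n, 0 < f n) {γ : ℝ} (hγ₀ : 0 < γ) (hγ : γ ≤ 1 / 4)
    (n : ℤ) : ‖klExcess f γ n / γ‖ ≤ discLaplacian f n + 4 * f n := by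
  rw [Real.norm_of_nonneg (div_nonneg (klExcess_nonneg hpos hγ₀.le (by linarith) n) hγ₀.le)]
  exact (klExcess_div_le hpos hγ₀ (by linarith) n).trans
    (mul_sq_discLaplacian_div_smoothPMF_le hpos hγ₀.le hγ n)

theorem tendsto_tsum_klExcess_div (hf : Summable f) (hpos : ∀ n, 0 < f n) :
    Tendsto (fun γ ↦ ∑' n, klExcess f γ n / γ) (𝓝[>] 0) (𝓝 0) := by
  have hbound : ∀ᶠ γ in 𝓝[>] 0, ∀ n, ‖klExcess f γ n / γ‖ ≤ discLaplacian f n + 4 * f n := by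
    filter_upwards [Ioo_mem_nhdsGT (by norm_num : (0 : ℝ) < 1 / 4)] with γ hγ
    exact norm_klExcess_div_le hpos hγ.1 hγ.2.le
  simpa using tendsto_tsum_of_dominated_convergence (hf.discLaplacian.add (hf.mul_left 4))
    (tendsto_klExcess_div hpos) hbound

theorem discKL_smoothPMF_div_eq (hf : Summable f) (hpos : ∀ n, 0 < f n) {γ : ℝ} (hγ₀ : 0 < γ)
    (hγ : γ ≤ 1 / 4) : discKL f (smoothPMF f γ) / γ = ∑' n, klExcess f γ n / γ := by
  have hexcess : Summable fun n ↦ klExcess f γ n / γ :=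
    Summable.of_norm_bounded (hf.discLaplacian.add (hf.mul_left 4))
      (norm_klExcess_div_le hpos hγ₀ hγ)
  have hsplit : ∀ n, klExcess f γ n / γ =
      f n * log (f n / smoothPMF f γ n) / γ + discLaplacian f n := by
    intro n
    rw [klExcess]
    field_simp
  simp_rw [hsplit] at hexcess ⊢
  have hKL := (hexcess.sub hf.discLaplacian).congr fun n ↦ add_sub_cancel_right _ _
  rw [hKL.tsum_add hf.discLaplacian, tsum_discLaplacian hf, add_zero, discKL,
    tsum_div_const]

end klExcess

theorem stmt18_general (f : ℤ → ℝ)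
    (hpos : ∀ n, 0 < f n) (hsum : ∑' n : ℤ, f n = 1) :
    Tendsto (fun γ : ℝ => discKL f (smoothPMF f γ) / γ) (𝓝[>] 0) (𝓝 0) := by
  have hf : Summable f := by
    by_contra h
    simp [tsum_eq_zero_of_not_summable h] at hsum
  refine (tendsto_tsum_klExcess_div hf hpos).congr' ?_
  filter_upwards [Ioo_mem_nhdsGT (by norm_num : (0 : ℝ) < 1 / 4)] with γ hγ
  exact (discKL_smoothPMF_div_eq hf hpos hγ.1 hγ.2.le).symm

theorem stmt18 (f : ℤ → ℝ)
    (hpos : ∀ n, 0 < f n) (hsum : ∑' n : ℤ, f n = 1)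
    (hKL : ∀ γ : ℝ, 0 < γ → γ < 1 / 2 →
      Summable (fun n : ℤ => f n * Real.log (f n / smoothPMF f γ n))) :
    Tendsto (fun γ : ℝ => discKL f (smoothPMF f γ) / γ) (𝓝[>] 0) (𝓝 0) :=
  stmt18_general f hpos hsum
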